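/- For the q-state Potts model with q ≥ 2, d ≥ 3, θ = 1/(e^β − 1) > 0, fix ℓ with 2 ≤ ℓ ≤ q and suppose qv < 1. Then there exists m_ℓ(θ) > 1 such that for every m = e^B ∈ [1, m_ℓ(θ)] and each sign s ∈ {+, −} there is a BP fixed point h ∈ Δ* and a constant z > 0 with: m·F(h_1) = z, where h_1 ≥ v if s = + and h_1 ≤ v if s = −; exactly ℓ − 1 of the coordinates h_σ with σ ≥ 2 equal a common value p_+ ∈ [v, 1] with F(p_+) = z; and the remaining q − ℓ of these coordinates equal a common value p_− ∈ (0, v] with F(p_−) = z (an ℓ_s-type solution). -/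

import Mathlib

open Finset Filter MeasureTheory

noncomputable section

/-! ## Simplex, specifications, Bethe functional -/

/-- The simplex of probability vectors on `Fin q`. -/
def simplex (q : ℕ) : Set (Fin q → ℝ) :=
  {h | (∀ σ, 0 ≤ h σ) ∧ ∑ σ, h σ = 1}

/-- `(ψ, ψ̄)` is a valid specification: `ψ` symmetric nonnegative, `ψ̄` positive. -/
def IsSpec {q : ℕ} (ψ : Fin q → Fin q → ℝ) (ψb : Fin q → ℝ) : Prop :=
  (∀ σ σ', ψ σ σ' = ψ σ' σ) ∧ (∀ σ σ', 0 ≤ ψ σ σ') ∧ ∀ σ, 0 < ψb σ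

/-- Permissivity of the interaction `ψ`. -/
def Permissive {q : ℕ} (ψ : Fin q → Fin q → ℝ) : Prop :=
  ∃ σp, ∀ σ, 0 < ψ σ σp

/-- The belief propagation (Bethe) recursion. -/
def BPmap (q d : ℕ) (ψ : Fin q → Fin q → ℝ) (ψb : Fin q → ℝ) (h : Fin q → ℝ) :
    Fin q → ℝ := fun σ =>
  ψb σ * (∑ σ', ψ σ σ' * h σ') ^ (d - 1) /
    ∑ τ, ψb τ * (∑ σ', ψ τ σ' * h σ') ^ (d - 1)

/-- The set `Δ*` of fixed points of the BP recursion in the simplex. -/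
def bpFixedPts (q d : ℕ) (ψ : Fin q → Fin q → ℝ) (ψb : Fin q → ℝ) : Set (Fin q → ℝ) :=
  {h | h ∈ simplex q ∧ BPmap q d ψ ψb h = h}

/-- The Bethe free energy functional `Φ(h)`. -/
def PhiFun (q d : ℕ) (ψ : Fin q → Fin q → ℝ) (ψb : Fin q → ℝ) (h : Fin q → ℝ) : ℝ :=
  Real.log (∑ σ, ψb σ * (∑ σ', ψ σ σ' * h σ') ^ d) -
    ((d : ℝ) / 2) * Real.log (∑ σ, ∑ σ', ψ σ σ' * h σ * h σ')

/-- The Bethe prediction `Φ = sup_{h ∈ Δ*} Φ(h)`. -/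
def BetheP (q d : ℕ) (ψ : Fin q → Fin q → ℝ) (ψb : Fin q → ℝ) : ℝ :=
  sSup (PhiFun q d ψ ψb '' bpFixedPts q d ψ ψb)

/-! ## Edge simplex and edge Bethe functional -/

/-- Symmetric probability measures on `Fin q × Fin q`. -/
def edgeSimplex (q : ℕ) : Set (Fin q → Fin q → ℝ) :=
  {h | (∀ σ σ', 0 ≤ h σ σ') ∧ (∀ σ σ', h σ σ' = h σ' σ) ∧ ∑ σ, ∑ σ', h σ σ' = 1}

/-- One-point marginal of an edge measure. -/
def marg (q : ℕ) (h : Fin q → Fin q → ℝ) : Fin q → ℝ := fun σ => ∑ σ', h σ σ'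

/-- Shannon entropy of a measure on `Fin q`. -/
def ent1 (q : ℕ) (p : Fin q → ℝ) : ℝ := -∑ σ, p σ * Real.log (p σ)

/-- Shannon entropy of a measure on `Fin q × Fin q`. -/
def ent2 (q : ℕ) (h : Fin q → Fin q → ℝ) : ℝ := -∑ σ, ∑ σ', h σ σ' * Real.log (h σ σ')

/-- The edge Bethe free energy functional `𝚽`. -/
def edgePhi (q d : ℕ) (ψ : Fin q → Fin q → ℝ) (ψb : Fin q → ℝ)
    (h : Fin q → Fin q → ℝ) : ℝ :=
  (∑ σ, marg q h σ * Real.log (ψb σ)) - ((d : ℝ) - 1) * ent1 q (marg q h) +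
    ((d : ℝ) / 2) * ((∑ σ, ∑ σ', h σ σ' * Real.log (ψ σ σ')) + ent2 q h)

/-- The embedding `g ↦ g ⊗_ψ g` of the simplex into the edge simplex. -/
def tensorPsi (q : ℕ) (ψ : Fin q → Fin q → ℝ) (g : Fin q → ℝ) : Fin q → Fin q → ℝ :=
  fun σ σ' => ψ σ σ' * g σ * g σ' / ∑ τ, ∑ τ', ψ τ τ' * g τ * g τ'

/-- All directional derivatives of `𝚽` within the edge simplex vanish at `h`. -/
def IsStationaryOn (q d : ℕ) (ψ : Fin q → Fin q → ℝ) (ψb : Fin q → ℝ)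
    (h : Fin q → Fin q → ℝ) : Prop :=
  ∀ h' ∈ edgeSimplex q,
    deriv (fun η : ℝ =>
      edgePhi q d ψ ψb fun σ σ' => h σ σ' + η * (h' σ σ' - h σ σ')) 0 = 0

/-! ## Matchings (configuration model) -/

/-- A perfect matching of `Fin N`, encoded as a fixed-point-free involution. -/
def IsMatching {N : ℕ} (m : Fin N → Fin N) : Prop :=
  Function.Involutive m ∧ ∀ i, m i ≠ i

instance {N : ℕ} : DecidablePred (IsMatching (N := N)) := fun m =>
  decidable_of_iff ((∀ i, m (m i) = i) ∧ ∀ i, m i ≠ i) Iff.rfl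

/-- The set `M_{d,n}` of perfect matchings (here of `Fin N`). -/
abbrev Matchings (N : ℕ) := {m : Fin N → Fin N // IsMatching m}

/-- Representative modulo `n` of a half-edge label. -/
def bar (d n : ℕ) (i : Fin (d * n)) : Fin n :=
  ⟨i.1 % n, Nat.mod_lt _ (Nat.pos_of_ne_zero fun h => by subst h; simpa using i.2)⟩

/-- Partition function of the factor model determined by a matching `γ ∈ M_{d,n}`. -/
def Zmatch (q d n : ℕ) (ψ : Fin q → Fin q → ℝ) (ψb : Fin q → ℝ)
    (γ : Matchings (d * n)) : ℝ :=
  ∑ σ : Fin n → Fin q,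
    (∏ v, ψb (σ v)) *
      ∏ i ∈ univ.filter fun i => i < γ.1 i, ψ (σ (bar d n i)) (σ (bar d n (γ.1 i)))

/-- Expectation under the uniform measure on matchings (configuration model). -/
def Ecm (d n : ℕ) (f : Matchings (d * n) → ℝ) : ℝ :=
  (∑ γ : Matchings (d * n), f γ) / (Fintype.card (Matchings (d * n)) : ℝ)

/-- The free energy `φ^cm_{d,n}` of the configuration model. -/
def phiCm (q d n : ℕ) (ψ : Fin q → Fin q → ℝ) (ψb : Fin q → ℝ) : ℝ :=
  (n : ℝ)⁻¹ * Ecm d n fun γ => Real.log (Zmatch q d n ψ ψb γ)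

/-- Probability of an event under the uniform measure on matchings. -/
def Pcm (d n : ℕ) (p : Matchings (d * n) → Prop) : ℝ :=
  (Nat.card {γ : Matchings (d * n) // p γ} : ℝ) / (Fintype.card (Matchings (d * n)) : ℝ)

/-! ## Multigraphs via adjacency counts, tree-like vertices, `ζ_t` -/

/-- Degree in a multigraph given by adjacency counts (a self-loop counts twice,
via the convention `A v v = 2 · #loops`). -/
def mgDeg {V : Type} [Fintype V] (A : V → V → ℕ) (u : V) : ℕ := ∑ w, A u w

/-- The simple graph underlying a multigraph (loops and multiplicities dropped). -/
def mgGraph {V : Type} (A : V → V → ℕ) : SimpleGraph V where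
  Adj u w := u ≠ w ∧ (A u w ≠ 0 ∨ A w u ≠ 0)
  symm := ⟨fun u w h => ⟨h.1.symm, h.2.symm⟩⟩
  loopless := ⟨fun u h => h.1 rfl⟩

/-- The radius-`t` ball around `v`. -/
def mball {V : Type} [Fintype V] (A : V → V → ℕ) (v : V) (t : ℕ) : Finset V := by
  classical exact univ.filter fun u => (mgGraph A).Reachable v u ∧ (mgGraph A).dist v u ≤ t

/-- `v` is `t`-tree-like: the radius-`t` ball around `v` is isomorphic to the depth-`t`
ball of the `d`-regular tree; concretely, every vertex at distance `< t` has degree `d`,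
the ball carries no self-loops or multi-edges, and the (connected) ball has exactly
`|ball| - 1` edges, i.e. contains no cycle. -/
def treeLike (d : ℕ) {V : Type} [Fintype V] (A : V → V → ℕ) (t : ℕ) (v : V) : Prop :=
  (∀ u, (mgGraph A).Reachable v u → (mgGraph A).dist v u < t → mgDeg A u = d) ∧
  (∀ u ∈ mball A v t, A u u = 0) ∧
  (∀ u ∈ mball A v t, ∀ w ∈ mball A v t, A u w ≤ 1) ∧
  (∑ u ∈ mball A v t, ∑ w ∈ mball A v t, A u w) = 2 * ((mball A v t).card - 1)

/-- Fraction `ζ_t` of vertices whose radius-`t` ball is not `d`-regular-tree-like. -/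
def zeta (d : ℕ) {V : Type} [Fintype V] (A : V → V → ℕ) (t : ℕ) : ℝ :=
  (Nat.card {v : V // ¬ treeLike d A t v} : ℝ) / (Fintype.card V : ℝ)

/-- Adjacency counts of the multigraph `G[γ]` determined by a matching. -/
def matchAdj {d n : ℕ} (γ : Matchings (d * n)) (u w : Fin n) : ℕ :=
  (univ.filter fun i : Fin (d * n) => bar d n i = u ∧ bar d n (γ.1 i) = w).card

/-- Adjacency counts of a simple graph. -/
def sgAdj {V : Type} [Fintype V] (G : SimpleGraph V) (u w : V) : ℕ := by
  classical exact if G.Adj u w then 1 else 0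

/-! ## Partition functions of graphs and multigraphs -/

/-- The Gibbs weight of a configuration on a simple graph. -/
def graphWeight (q : ℕ) {V : Type} [Fintype V] [LinearOrder V] (ψ : Fin q → Fin q → ℝ)
    (ψb : Fin q → ℝ) (G : SimpleGraph V) (σ : V → Fin q) : ℝ := by
  classical exact
    (∏ v, ψb (σ v)) *
      ∏ p ∈ univ.filter fun p : V × V => p.1 < p.2 ∧ G.Adj p.1 p.2, ψ (σ p.1) (σ p.2)

/-- Partition function of the factor model on a simple graph. -/
def ZG (q : ℕ) {V : Type} [Fintype V] [LinearOrder V] (ψ : Fin q → Fin q → ℝ)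
    (ψb : Fin q → ℝ) (G : SimpleGraph V) : ℝ :=
  ∑ σ : V → Fin q, graphWeight q ψ ψb G σ

/-- The Gibbs weight of a configuration on a multigraph. -/
def mgWeight (q : ℕ) {V : Type} [Fintype V] [LinearOrder V] (ψ : Fin q → Fin q → ℝ)
    (ψb : Fin q → ℝ) (A : V → V → ℕ) (σ : V → Fin q) : ℝ :=
  (∏ v, ψb (σ v)) *
    (∏ p ∈ univ.filter fun p : V × V => p.1 < p.2, ψ (σ p.1) (σ p.2) ^ A p.1 p.2) *
    ∏ v, ψ (σ v) (σ v) ^ (A v v / 2)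

/-- Partition function of the factor model on a multigraph. -/
def Zmg (q : ℕ) {V : Type} [Fintype V] [LinearOrder V] (ψ : Fin q → Fin q → ℝ)
    (ψb : Fin q → ℝ) (A : V → V → ℕ) : ℝ :=
  ∑ σ : V → Fin q, mgWeight q ψ ψb A σ

/-- Remove a vertex from a multigraph (delete all incident edges). -/
def removeVx {V : Type} [DecidableEq V] (A : V → V → ℕ) (v : V) : V → V → ℕ :=
  fun i j => if i = v ∨ j = v then 0 else A i j

/-- Law of the spins of the (enumerated) neighbors of `v` under the factor model
on the multigraph with `v` removed. -/
def nuMinus (q d N : ℕ) (ψ : Fin q → Fin q → ℝ) (ψb : Fin q → ℝ)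
    (A : Fin N → Fin N → ℕ) (v : Fin N) (vs : Fin d → Fin N) (τ : Fin d → Fin q) : ℝ :=
  (∑ᶠ (σ : Fin N → Fin q) (_ : ∀ j, σ (vs j) = τ j), mgWeight q ψ ψb (removeVx A v) σ) /
    Zmg q ψ ψb (removeVx A v)

/-- Total variation distance of probability vectors. -/
def dTV {α : Type} [Fintype α] (p r : α → ℝ) : ℝ := (∑ x, |p x - r x|) / 2

/-- The mixture `ρ̄` of product measures associated to a measure `ρ` on `Δ^d`. -/
def rhoBar (q d : ℕ) (ρ : Measure (Fin d → Fin q → ℝ)) (τ : Fin d → Fin q) : ℝ :=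
  ∫ h, (∏ j, h j (τ j)) ∂ρ

/-- `x` lies in the (topological) support of the measure `ρ`. -/
def inSupp {α : Type*} [TopologicalSpace α] {m : MeasurableSpace α}
    (ρ : Measure α) (x : α) : Prop :=
  ∀ U : Set α, IsOpen U → x ∈ U → 0 < ρ U

/-- Symmetric multigraph adjacency data with an even number of half-loops. -/
def IsMultigraphAdj {V : Type} (A : V → V → ℕ) : Prop :=
  (∀ u w, A u w = A w u) ∧ ∀ v, Even (A v v)

/-- `d`-regularity of a multigraph. -/
def IsRegAdj (d : ℕ) {V : Type} [Fintype V] (A : V → V → ℕ) : Prop :=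
  ∀ v, mgDeg A v = d

/-! ## The functionals `Ψ^vx`, `Ψ^e`, `Ψ^{e,sym}`, `Ψ^sym` -/

def PsiVx (q d : ℕ) (ψ : Fin q → Fin q → ℝ) (ψb : Fin q → ℝ)
    (h : Fin d → Fin q → ℝ) : ℝ :=
  ∑ σ, ψb σ * ∏ j, ∑ σ', ψ σ σ' * h j σ'

def PsiE (q d : ℕ) (ψ : Fin q → Fin q → ℝ) (h : Fin d → Fin q → ℝ) : ℝ :=
  ∏ j : Fin (d / 2),
    ∑ σ, ∑ σ', ψ σ σ' * h ⟨2 * j.1, by have := j.2; omega⟩ σ *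
      h ⟨2 * j.1 + 1, by have := j.2; omega⟩ σ'

def PsiEsym (q d : ℕ) (ψ : Fin q → Fin q → ℝ) (h : Fin d → Fin q → ℝ) : ℝ :=
  (∑ π : Equiv.Perm (Fin d), PsiE q d ψ fun j => h (π j)) / (Nat.factorial d : ℝ)

def PsiSym (q d : ℕ) (ψ : Fin q → Fin q → ℝ) (ψb : Fin q → ℝ)
    (h : Fin d → Fin q → ℝ) : ℝ :=
  PsiVx q d ψ ψb h / PsiEsym q d ψ h

/-! ## Potts model -/

/-- Potts pair interaction. -/
def pottsPsi (q : ℕ) (β : ℝ) : Fin q → Fin q → ℝ :=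
  fun σ σ' => Real.exp (if σ = σ' then β else 0)

/-- Potts magnetic field (favoring the spin with index `0`). -/
def pottsPsib (q : ℕ) (B : ℝ) : Fin q → ℝ :=
  fun σ => Real.exp (if σ.1 = 0 then B else 0)

/-- The one-parameter family `h_b ∈ Δ̄` of biased measures. -/
def pottsHb (q : ℕ) (b : ℝ) : Fin q → ℝ :=
  fun σ => if σ.1 = 0 then (1 + ((q : ℝ) - 1) * b) / q else (1 - b) / q

/-- The univariate Bethe recursion `bp` on the bias parameter `b`. -/
def pottsBp (q d : ℕ) (β B : ℝ) (b : ℝ) : ℝ :=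
  ((q : ℝ) * (∑ σ ∈ univ.filter fun σ : Fin q => σ.1 = 0,
      BPmap q d (pottsPsi q β) (pottsPsib q B) (pottsHb q b) σ) - 1) / ((q : ℝ) - 1)

/-- `b_f`, the limit of the (monotone) BP iterates started from `b = 0`. -/
def bLo (q d : ℕ) (β B : ℝ) : ℝ := ⨆ t : ℕ, (pottsBp q d β B)^[t] 0

/-- `b_m`, the limit of the (monotone) BP iterates started from `b = 1`. -/
def bHi (q d : ℕ) (β B : ℝ) : ℝ := ⨅ t : ℕ, (pottsBp q d β B)^[t] 1

/-- The function `F(x) = x⁻¹ (x/θ + 1)^{d-1}`. -/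
def Fpotts (d : ℕ) (θ x : ℝ) : ℝ := x⁻¹ * (x / θ + 1) ^ (d - 1)

/-! ## Exchangeable pairs and the symmetric correlation coefficient -/

def eMean (q : ℕ) (h φ : Fin q → Fin q → ℝ) : ℝ := ∑ σ, ∑ σ', h σ σ' * φ σ σ'

def eVar (q : ℕ) (h φ : Fin q → Fin q → ℝ) : ℝ :=
  ∑ σ, ∑ σ', h σ σ' * (φ σ σ' - eMean q h φ) ^ 2

def eCondVar (q : ℕ) (h φ : Fin q → Fin q → ℝ) : ℝ :=
  ∑ σ, marg q h σ * ((∑ σ', h σ σ' * φ σ σ') / marg q h σ - eMean q h φ) ^ 2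

/-- The symmetric correlation coefficient `ρ_XY` of an exchangeable pair with law `h`. -/
def rhoXY (q : ℕ) (h : Fin q → Fin q → ℝ) : ℝ :=
  sSup {r | ∃ φ : Fin q → Fin q → ℝ, (∀ σ σ', φ σ σ' = φ σ' σ) ∧ 0 < eVar q h φ ∧
    r = eCondVar q h φ / eVar q h φ}

/-! ## Empirical measures, misc -/

/-- The edge empirical measure `L^e(σ, γ)`. -/
def edgeEmp (q d n : ℕ) (γ : Matchings (d * n)) (σ : Fin n → Fin q) :
    Fin q → Fin q → ℝ :=
  fun τ τ' =>
    ((univ.filter fun i : Fin (d * n) =>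
        σ (bar d n i) = τ ∧ σ (bar d n (γ.1 i)) = τ').card : ℝ) / ((n : ℝ) * d)

/-- The vertex empirical (spin) distribution `L^vx(σ)`. -/
def empDist (q n : ℕ) (σ : Fin n → Fin q) : Fin q → ℝ :=
  fun τ => (Nat.card {i : Fin n // σ i = τ} : ℝ) / n

/-- Probability of an event under a weight function. -/
def probOf {α : Type*} (P : α → ℝ) (p : α → Prop) : ℝ := ∑ᶠ (x : α) (_ : p x), P x

/-- Probability of an event under the uniform measure on simple `d`-regular graphs. -/
def Preg (d n : ℕ) (p : SimpleGraph (Fin n) → Prop) : ℝ :=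
  (Nat.card {G : SimpleGraph (Fin n) // (∀ v, mgDeg (sgAdj G) v = d) ∧ p G} : ℝ) /
    (Nat.card {G : SimpleGraph (Fin n) // ∀ v, mgDeg (sgAdj G) v = d} : ℝ)

/-- Adjoin to `G` one new vertex, adjacent to the vertices of `S`. -/
def addVertex (k : ℕ) (G : SimpleGraph (Fin k)) (S : Finset (Fin k)) :
    SimpleGraph (Fin (k + 1)) :=
  SimpleGraph.fromRel fun a b =>
    (∃ u w : Fin k, a = u.castSucc ∧ b = w.castSucc ∧ G.Adj u w) ∨
      (a = Fin.last k ∧ ∃ w ∈ S, b = w.castSucc)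

/-- Strict local maximizer of the edge Bethe functional on the edge simplex. -/
def strictLocalMaxOnEdge (q d : ℕ) (ψ : Fin q → Fin q → ℝ) (ψb : Fin q → ℝ)
    (H : Fin q → Fin q → ℝ) : Prop :=
  ∃ ε : ℝ, 0 < ε ∧ ∀ h' ∈ edgeSimplex q, h' ≠ H → dist h' H < ε →
    edgePhi q d ψ ψb h' < edgePhi q d ψ ψb H

/-- Strictly negative second variation of the edge Bethe functional at `H`, in every
nonzero symmetric direction of total mass zero. -/
def negSecondVar (q d : ℕ) (ψ : Fin q → Fin q → ℝ) (ψb : Fin q → ℝ)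
    (H : Fin q → Fin q → ℝ) : Prop :=
  ∀ δ : Fin q → Fin q → ℝ, δ ≠ 0 → (∀ σ σ', δ σ σ' = δ σ' σ) →
    (∑ σ, ∑ σ', δ σ σ') = 0 →
    iteratedDeriv 2 (fun η : ℝ => edgePhi q d ψ ψb fun σ σ' => H σ σ' + η * δ σ σ') 0 < 0

/-!
`F` decreases on `(0, v]` and increases on `[v, 1]`, so it has continuous inverse branches
`g₋ : [F v, F 1] → (0, v]` and `g₊ : [F v, F 1] → [v, 1]`. With `g_s` the branch of sign `s`,
an `ℓ_s`-type solution is a level `z` with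
`T z := g_s (z / m) + (ℓ - 1) g₊ z + (q - ℓ) g₋ z = 1`. Here `T (m F v)` is close to `q v < 1`
when `m` is close to `1`, while `T (F 1) ≥ ℓ - 1 ≥ 1` because `g₊ (F 1) = 1`, so the
intermediate value theorem produces `z`. The scalars become a BP fixed point because, for the
Potts interaction, `Σ_σ' ψ(σ, σ') h_σ' = h_σ / θ + 1` on the simplex, so that
`(BP h)(σ) ∝ ψ̄(σ) F(h_σ) h_σ`.
-/

section ContinuousInverse

variable {α β : Type*} [ConditionallyCompleteLinearOrder α] [TopologicalSpace α] [OrderTopology α]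
  [DenselyOrdered α] [LinearOrder β] [TopologicalSpace β] [OrderTopology β]
  {f : α → β} {a b : α}

theorem StrictMonoOn.exists_continuous_invOn_Icc (hab : a ≤ b)
    (hf : ContinuousOn f (Set.Icc a b)) (hmono : StrictMonoOn f (Set.Icc a b)) :
    ∃ g : β → α, Continuous g ∧ Set.MapsTo g (Set.Icc (f a) (f b)) (Set.Icc a b) ∧
      Set.InvOn g f (Set.Icc a b) (Set.Icc (f a) (f b)) := by
  have hfab : f a ≤ f b := hmono.monotoneOn ⟨le_rfl, hab⟩ ⟨hab, le_rfl⟩ hab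
  let e : Set.Icc a b → Set.Icc (f a) (f b) := fun x =>
    ⟨f x, hmono.monotoneOn ⟨le_rfl, hab⟩ x.2 x.2.1, hmono.monotoneOn x.2 ⟨hab, le_rfl⟩ x.2.2⟩
  have he : StrictMono e := fun x y hxy => hmono x.2 y.2 hxy
  have hsurj : Function.Surjective e := by
    rintro ⟨y, hy⟩
    obtain ⟨x, hx, rfl⟩ := intermediate_value_Icc hab hf hy
    exact ⟨⟨x, hx⟩, rfl⟩
  let E := he.orderIsoOfSurjective e hsurj
  -- Clamping with `projIcc` before inverting makes the inverse continuous on all of `β`.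
  refine ⟨fun y => E.symm (Set.projIcc _ _ hfab y),
    continuous_subtype_val.comp (E.symm.continuous.comp continuous_projIcc),
    fun y _ => (E.symm _).2, fun x hx => ?_, fun y hy => ?_⟩
  · have : Set.projIcc _ _ hfab (f x) = E ⟨x, hx⟩ := Set.projIcc_of_mem _ _
    simp [this]
  · simp only [Set.projIcc_of_mem _ hy]
    exact congrArg Subtype.val (E.apply_symm_apply ⟨y, hy⟩)

theorem StrictAntiOn.exists_continuous_invOn_Icc (hab : a ≤ b)
    (hf : ContinuousOn f (Set.Icc a b)) (hanti : StrictAntiOn f (Set.Icc a b)) :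
    ∃ g : β → α, Continuous g ∧ Set.MapsTo g (Set.Icc (f b) (f a)) (Set.Icc a b) ∧
      Set.InvOn g f (Set.Icc a b) (Set.Icc (f b) (f a)) := by
  obtain ⟨g, hg, hmaps, hinv⟩ := StrictMonoOn.exists_continuous_invOn_Icc hab
    (continuous_toDual.comp_continuousOn hf) (strictMonoOn_toDual_comp_iff.2 hanti)
  refine ⟨g ∘ OrderDual.toDual, hg.comp continuous_toDual, fun y hy => hmaps ⟨hy.2, hy.1⟩,
    hinv.1, fun y hy => hinv.2 ⟨hy.2, hy.1⟩⟩

end ContinuousInverse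

section Fpotts

variable {d : ℕ} {θ x : ℝ}

theorem div_sub_two_pos (hd : 3 ≤ d) (hθ : 0 < θ) : 0 < θ / ((d : ℝ) - 2) :=
  div_pos hθ (by linarith [show (3 : ℝ) ≤ d by exact_mod_cast hd])

theorem Fpotts_pos (hθ : 0 < θ) (hx : 0 < x) : 0 < Fpotts d θ x := by
  unfold Fpotts; positivity

theorem inv_le_Fpotts (hθ : 0 < θ) (hx : 0 < x) : x⁻¹ ≤ Fpotts d θ x :=
  le_mul_of_one_le_right (inv_pos.2 hx).le (one_le_pow₀ (le_add_of_nonneg_left (by positivity)))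

theorem hasDerivAt_Fpotts (hd : 2 ≤ d) (hθ : θ ≠ 0) (hx : x ≠ 0) :
    HasDerivAt (Fpotts d θ)
      ((x ^ 2)⁻¹ * (x / θ + 1) ^ (d - 2) * (((d : ℝ) - 2) * x - θ) / θ) x := by
  obtain ⟨k, rfl⟩ : ∃ k, d = k + 2 := ⟨d - 2, by omega⟩
  have hu : HasDerivAt (fun y : ℝ => (y / θ + 1) ^ (k + 1))
      ((k + 1 : ℕ) * (x / θ + 1) ^ k * (1 / θ)) x :=
    (((hasDerivAt_id' x).div_const θ).add_const 1).fun_pow (k + 1)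
  have h := (hasDerivAt_inv hx).fun_mul hu
  refine h.congr_deriv ?_
  simp only [Nat.add_sub_cancel, Nat.cast_add, Nat.cast_ofNat, Nat.cast_one, pow_succ _ k]
  field_simp
  ring

theorem continuousOn_Fpotts (hd : 2 ≤ d) (hθ : θ ≠ 0) : ContinuousOn (Fpotts d θ) (Set.Ioi 0) :=
  fun _ hx => (hasDerivAt_Fpotts hd hθ (ne_of_gt hx)).continuousAt.continuousWithinAt

theorem Fpotts_strictMonoOn (hd : 3 ≤ d) (hθ : 0 < θ) :
    StrictMonoOn (Fpotts d θ) (Set.Ici (θ / ((d : ℝ) - 2))) := by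
  have hd2 : (0 : ℝ) < d - 2 := by linarith [show (3 : ℝ) ≤ d by exact_mod_cast hd]
  have hv := div_sub_two_pos hd hθ
  refine strictMonoOn_of_deriv_pos (convex_Ici _)
    ((continuousOn_Fpotts (by omega) hθ.ne').mono fun y hy => hv.trans_le hy) fun y hy => ?_
  rw [interior_Ici] at hy
  have hy0 : 0 < y := hv.trans hy
  rw [(hasDerivAt_Fpotts (by omega) hθ.ne' hy0.ne').deriv]
  have : 0 < ((d : ℝ) - 2) * y - θ := by linarith [(div_lt_iff₀' hd2).1 hy]
  positivity

theorem Fpotts_strictAntiOn (hd : 3 ≤ d) (hθ : 0 < θ) :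
    StrictAntiOn (Fpotts d θ) (Set.Ioc 0 (θ / ((d : ℝ) - 2))) := by
  have hd2 : (0 : ℝ) < d - 2 := by linarith [show (3 : ℝ) ≤ d by exact_mod_cast hd]
  refine strictAntiOn_of_deriv_neg (convex_Ioc _ _)
    ((continuousOn_Fpotts (by omega) hθ.ne').mono fun y hy => hy.1) fun y hy => ?_
  rw [interior_Ioc] at hy
  rw [(hasDerivAt_Fpotts (by omega) hθ.ne' hy.1.ne').deriv]
  have hneg : ((d : ℝ) - 2) * y - θ < 0 := by linarith [(lt_div_iff₀' hd2).1 hy.2]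
  have hy0 := hy.1
  have hpos : 0 < (y ^ 2)⁻¹ * (y / θ + 1) ^ (d - 2) := by positivity
  exact div_neg_of_neg_of_pos (mul_neg_of_pos_of_neg hpos hneg) hθ

theorem exists_Fpotts_inverse_branches (hd : 3 ≤ d) (hθ : 0 < θ)
    (hv1 : θ / ((d : ℝ) - 2) < 1) :
    ∃ gP gM : ℝ → ℝ, Continuous gP ∧ Continuous gM ∧
      gP (Fpotts d θ (θ / ((d : ℝ) - 2))) = θ / ((d : ℝ) - 2) ∧ gP (Fpotts d θ 1) = 1 ∧
      gM (Fpotts d θ (θ / ((d : ℝ) - 2))) = θ / ((d : ℝ) - 2) ∧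
      ∀ z ∈ Set.Icc (Fpotts d θ (θ / ((d : ℝ) - 2))) (Fpotts d θ 1),
        gP z ∈ Set.Icc (θ / ((d : ℝ) - 2)) 1 ∧ Fpotts d θ (gP z) = z ∧
        gM z ∈ Set.Ioc 0 (θ / ((d : ℝ) - 2)) ∧ Fpotts d θ (gM z) = z := by
  set v := θ / ((d : ℝ) - 2)
  set F := Fpotts d θ
  have hv : 0 < v := div_sub_two_pos hd hθ
  have hcont := continuousOn_Fpotts (d := d) (by omega) hθ.ne'
  obtain ⟨gP, hgP, hmapsP, hinvP⟩ := StrictMonoOn.exists_continuous_invOn_Icc hv1.le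
    (hcont.mono fun x hx => hv.trans_le hx.1)
    ((Fpotts_strictMonoOn hd hθ).mono Set.Icc_subset_Ici_self)
  -- `c` is chosen so that `F c ≥ c⁻¹ ≥ F 1`: the decreasing branch covers `[F v, F 1]`.
  set c := min v (F 1)⁻¹
  have hF1 : 0 < F 1 := Fpotts_pos hθ one_pos
  have hc : 0 < c := lt_min hv (inv_pos.2 hF1)
  have hFc : F 1 ≤ F c :=
    ((le_inv_comm₀ hc hF1).1 (min_le_right _ _)).trans (inv_le_Fpotts hθ hc)
  obtain ⟨gM, hgM, hmapsM, hinvM⟩ := StrictAntiOn.exists_continuous_invOn_Icc (min_le_left _ _)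
    (hcont.mono fun x hx => hc.trans_le hx.1)
    ((Fpotts_strictAntiOn hd hθ).mono fun x hx => ⟨hc.trans_le hx.1, hx.2⟩)
  refine ⟨gP, gM, hgP, hgM, hinvP.1 ⟨le_rfl, hv1.le⟩, hinvP.1 ⟨hv1.le, le_rfl⟩,
    hinvM.1 ⟨min_le_left _ _, le_rfl⟩, fun z hz => ?_⟩
  have hz' : z ∈ Set.Icc (F v) (F c) := ⟨hz.1, hz.2.trans hFc⟩
  exact ⟨hmapsP hz, hinvP.2 hz, ⟨hc.trans_le (hmapsM hz').1, (hmapsM hz').2⟩, hinvM.2 hz'⟩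

theorem exists_Fpotts_signed_branch (hd : 3 ≤ d) (hθ : 0 < θ) (hv1 : θ / ((d : ℝ) - 2) < 1)
    (s : Bool) :
    ∃ g : ℝ → ℝ, Continuous g ∧ g (Fpotts d θ (θ / ((d : ℝ) - 2))) = θ / ((d : ℝ) - 2) ∧
      ∀ w ∈ Set.Icc (Fpotts d θ (θ / ((d : ℝ) - 2))) (Fpotts d θ 1), 0 < g w ∧
        Fpotts d θ (g w) = w ∧
        (if s then θ / ((d : ℝ) - 2) ≤ g w else g w ≤ θ / ((d : ℝ) - 2)) := by
  obtain ⟨gP, gM, hgP, hgM, hgPv, -, hgMv, hbranch⟩ := exists_Fpotts_inverse_branches hd hθ hv1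
  cases s
  · exact ⟨gM, hgM, hgMv, fun w hw => ⟨(hbranch w hw).2.2.1.1, (hbranch w hw).2.2.2,
      by simpa using (hbranch w hw).2.2.1.2⟩⟩
  · exact ⟨gP, hgP, hgPv, fun w hw => ⟨(div_sub_two_pos hd hθ).trans_le (hbranch w hw).1.1,
      (hbranch w hw).2.1, by simpa using (hbranch w hw).1.1⟩⟩

end Fpotts

theorem exists_Fpotts_scalar_solution {d k n : ℕ} {θ : ℝ} (hd : 3 ≤ d) (hθ : 0 < θ)
    (hk : 1 ≤ k) (hv : (k + n + 1 : ℕ) * (θ / ((d : ℝ) - 2)) < 1) :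
    ∃ ml : ℝ, 1 < ml ∧ ∀ m : ℝ, 1 ≤ m → m ≤ ml → ∀ s : Bool,
      ∃ h₀ pP pM z : ℝ, 0 < z ∧ 0 < h₀ ∧ m * Fpotts d θ h₀ = z ∧
        (if s then θ / ((d : ℝ) - 2) ≤ h₀ else h₀ ≤ θ / ((d : ℝ) - 2)) ∧
        θ / ((d : ℝ) - 2) ≤ pP ∧ pP ≤ 1 ∧ 0 < pM ∧ pM ≤ θ / ((d : ℝ) - 2) ∧
        Fpotts d θ pP = z ∧ Fpotts d θ pM = z ∧ h₀ + k * pP + n * pM = 1 := by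
  have hv0 := div_sub_two_pos hd hθ
  have hv1 : θ / ((d : ℝ) - 2) < 1 := by
    have : (2 : ℝ) ≤ (k + n + 1 : ℕ) := by exact_mod_cast (by omega : 2 ≤ k + n + 1)
    nlinarith
  obtain ⟨gP, gM, hgP, hgM, hgPv, hgP1, hgMv, hbranch⟩ :=
    exists_Fpotts_inverse_branches hd hθ hv1
  have hsigned := exists_Fpotts_signed_branch hd hθ hv1
  set v := θ / ((d : ℝ) - 2)
  set F := Fpotts d θ
  have hFv : 0 < F v := Fpotts_pos hθ hv0
  have hFv1 : F v < F 1 := Fpotts_strictMonoOn hd hθ (Set.mem_Ici.2 le_rfl) hv1.le hv1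
  set φ : ℝ → ℝ := fun m => v + k * gP (m * F v) + n * gM (m * F v)
  have hφ1 : φ 1 < 1 := by
    simp only [φ, one_mul, hgPv, hgMv]
    push_cast at hv
    linarith
  obtain ⟨ml₀, hml₀, hφ⟩ := mem_nhdsGE_iff_exists_Icc_subset.1 <| nhdsWithin_le_nhds <|
    (show Continuous φ by fun_prop).continuousAt.eventually_lt continuousAt_const hφ1
  refine ⟨min ml₀ (F 1 / F v), lt_min hml₀ ((one_lt_div hFv).2 hFv1), ?_⟩
  intro m hm1 hml s
  have hm0 : 0 < m := one_pos.trans_le hm1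
  have hmF : m * F v ≤ F 1 := (le_div_iff₀ hFv).1 (hml.trans (min_le_right _ _))
  obtain ⟨gS, hgS, hgSv, hgS_mem⟩ := hsigned s
  set T : ℝ → ℝ := fun z => gS (z / m) + k * gP z + n * gM z
  have hself : ∀ z ∈ Set.Icc (m * F v) (F 1), z ∈ Set.Icc (F v) (F 1) := fun z hz =>
    ⟨(le_mul_of_one_le_left hFv.le hm1).trans hz.1, hz.2⟩
  have hdiv : ∀ z ∈ Set.Icc (m * F v) (F 1), z / m ∈ Set.Icc (F v) (F 1) := fun z hz =>
    ⟨(le_div_iff₀ hm0).2 (by linarith [hz.1]),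
      (div_le_self (hFv.le.trans (hself z hz).1) hm1).trans hz.2⟩
  have hTlo : T (m * F v) < 1 := by
    simpa only [T, φ, mul_div_cancel_left₀ _ hm0.ne', hgSv] using
      show φ m < 1 from hφ ⟨hm1, hml.trans (min_le_left _ _)⟩
  have hThi : 1 ≤ T (F 1) := by
    have hS := (hgS_mem _ (hdiv _ ⟨hmF, le_rfl⟩)).1
    have hM := (hbranch _ ⟨hFv1.le, le_rfl⟩).2.2.1.1
    have hk' : (1 : ℝ) ≤ k := by exact_mod_cast hk
    simp only [T, hgP1]
    nlinarith
  obtain ⟨z, hz, hTz⟩ := intermediate_value_Icc hmF (hgS.comp (continuous_id.div_const m) |>.add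
    (continuous_const.mul hgP) |>.add (continuous_const.mul hgM)).continuousOn ⟨hTlo.le, hThi⟩
  obtain ⟨hS0, hFS, hSs⟩ := hgS_mem _ (hdiv z hz)
  obtain ⟨hPmem, hFP, hMmem, hFM⟩ := hbranch z (hself z hz)
  refine ⟨gS (z / m), gP z, gM z, z, hFv.trans_le (hself z hz).1, hS0, ?_, hSs, hPmem.1,
    hPmem.2, hMmem.1, hMmem.2, hFP, hFM, hTz⟩
  rw [hFS, mul_div_cancel₀ _ hm0.ne']

theorem sum_ite_eq_ite_mem_of_subset_erase {ι R : Type*} [Fintype ι] [DecidableEq ι]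
    [NonAssocSemiring R] {i₀ : ι} {S : Finset ι} (hS : S ⊆ univ.erase i₀) (a b c : R) :
    ∑ i, (if i = i₀ then a else if i ∈ S then b else c) =
      a + #S * b + (Fintype.card ι - 1 - #S : ℕ) * c := by
  rw [← add_sum_erase _ _ (mem_univ i₀), if_pos rfl,
    sum_congr rfl fun i hi => if_neg (ne_of_mem_erase hi), sum_ite, sum_const, sum_const,
    filter_mem_eq_inter, inter_eq_right.2 hS, filter_notMem_eq_sdiff, card_sdiff_of_subset hS,
    card_erase_of_mem (mem_univ _), card_univ, nsmul_eq_mul, nsmul_eq_mul, add_assoc]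

theorem sum_pottsPsi_mul (q : ℕ) (β : ℝ) (h : Fin q → ℝ) (σ : Fin q) :
    ∑ σ', pottsPsi q β σ σ' * h σ' = (Real.exp β - 1) * h σ + ∑ σ', h σ' := by
  have hterm : ∀ σ', pottsPsi q β σ σ' * h σ' =
      (if σ = σ' then (Real.exp β - 1) * h σ' else 0) + h σ' := fun σ' => by
    unfold pottsPsi
    split_ifs
    · ring
    · simp
  simp only [hterm, sum_add_distrib, sum_ite_eq, mem_univ, if_true]

theorem mem_bpFixedPts_potts {q d : ℕ} {β B z : ℝ} {h : Fin q → ℝ} (hsimplex : h ∈ simplex q)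
    (hne : ∀ σ, h σ ≠ 0) (hz : z ≠ 0)
    (hF : ∀ σ, pottsPsib q B σ * Fpotts d (1 / (Real.exp β - 1)) (h σ) = z) :
    h ∈ bpFixedPts q d (pottsPsi q β) (pottsPsib q B) := by
  have hnum : ∀ σ, pottsPsib q B σ * (∑ σ', pottsPsi q β σ σ' * h σ') ^ (d - 1) = z * h σ := by
    intro σ
    have := hne σ
    rw [sum_pottsPsi_mul, hsimplex.2, ← hF σ, Fpotts]
    field_simp
  refine ⟨hsimplex, funext fun σ => ?_⟩
  rw [BPmap, hnum, sum_congr rfl fun τ _ => hnum τ, ← mul_sum, hsimplex.2, mul_one,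
    mul_div_cancel_left₀ _ hz]

theorem mem_bpFixedPts_potts_of_levels {q d : ℕ} {β B z h₀ pP pM : ℝ} {σ₀ : Fin q}
    (hσ₀ : σ₀.1 = 0) {S : Finset (Fin q)} (hS : S ⊆ univ.erase σ₀)
    (hh₀ : 0 < h₀) (hpP : 0 < pP) (hpM : 0 < pM) (hz : z ≠ 0)
    (hF₀ : Real.exp B * Fpotts d (1 / (Real.exp β - 1)) h₀ = z)
    (hFP : Fpotts d (1 / (Real.exp β - 1)) pP = z) (hFM : Fpotts d (1 / (Real.exp β - 1)) pM = z)
    (hsum : h₀ + #S * pP + (q - 1 - #S : ℕ) * pM = 1) :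
    (fun σ => if σ = σ₀ then h₀ else if σ ∈ S then pP else pM) ∈
      bpFixedPts q d (pottsPsi q β) (pottsPsib q B) := by
  have hpos : ∀ σ, 0 < if σ = σ₀ then h₀ else if σ ∈ S then pP else pM := fun σ => by
    split_ifs <;> assumption
  refine mem_bpFixedPts_potts ⟨fun σ => (hpos σ).le, ?_⟩ (fun σ => (hpos σ).ne') hz fun σ => ?_
  · rw [sum_ite_eq_ite_mem_of_subset_erase hS, Fintype.card_fin, hsum]
  by_cases h₁ : σ = σ₀
  · simpa [h₁, pottsPsib, hσ₀] using hF₀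
  · have : σ.1 ≠ 0 := fun h => h₁ (Fin.ext (h.trans hσ₀.symm))
    simp only [pottsPsib, this, if_false, Real.exp_zero, one_mul]
    split_ifs <;> assumption

/-- existence of `ℓ_±`-type Potts BP fixed points for `2 ≤ ℓ ≤ q`, provided
`qv < 1` and the field `m = e^B` is sufficiently close to `1`. -/
theorem potts_ell_type_solutions_exist
    (q d ℓ : ℕ) (hd : 3 ≤ d) (hl2 : 2 ≤ ℓ) (hlq : ℓ ≤ q)
    (β : ℝ) (hβ : 0 < β)
    (hqv : (q : ℝ) * ((1 / (Real.exp β - 1)) / ((d : ℝ) - 2)) < 1) :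
    ∃ ml : ℝ, 1 < ml ∧ ∀ B : ℝ, 0 ≤ B → Real.exp B ≤ ml →
      ∀ s : Bool,
        ∃ h ∈ bpFixedPts q d (pottsPsi q β) (pottsPsib q B), ∃ z : ℝ, 0 < z ∧
          Real.exp B * Fpotts d (1 / (Real.exp β - 1)) (h ⟨0, by omega⟩) = z ∧
          (if s then (1 / (Real.exp β - 1)) / ((d : ℝ) - 2) ≤ h ⟨0, by omega⟩
            else h ⟨0, by omega⟩ ≤ (1 / (Real.exp β - 1)) / ((d : ℝ) - 2)) ∧
          ∃ pP pM : ℝ,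
            (1 / (Real.exp β - 1)) / ((d : ℝ) - 2) ≤ pP ∧ pP ≤ 1 ∧
            0 < pM ∧ pM ≤ (1 / (Real.exp β - 1)) / ((d : ℝ) - 2) ∧
            Fpotts d (1 / (Real.exp β - 1)) pP = z ∧
            Fpotts d (1 / (Real.exp β - 1)) pM = z ∧
            ∃ S : Finset (Fin q), (⟨0, by omega⟩ : Fin q) ∉ S ∧ S.card = ℓ - 1 ∧
              (∀ σ ∈ S, h σ = pP) ∧
              ∀ σ : Fin q, σ ≠ ⟨0, by omega⟩ → σ ∉ S → h σ = pM := by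
  have hθ : 0 < 1 / (Real.exp β - 1) := one_div_pos.2 (sub_pos.2 (Real.one_lt_exp_iff.2 hβ))
  obtain ⟨ml, hml, hsol⟩ := exists_Fpotts_scalar_solution (k := ℓ - 1) (n := q - ℓ) hd hθ
    (by omega) (by rwa [show ℓ - 1 + (q - ℓ) + 1 = q by omega])
  have hv := div_sub_two_pos hd hθ
  refine ⟨ml, hml, fun B hB hBml s => ?_⟩
  obtain ⟨h₀, pP, pM, z, hz, hh₀, hmF, hs, hvP, hP1, hM0, hMv, hFP, hFM, hsum⟩ :=
    hsol _ (Real.one_le_exp hB) hBml s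
  set σ₀ : Fin q := ⟨0, by omega⟩
  obtain ⟨S, hS, hScard⟩ := exists_subset_card_eq (s := univ.erase σ₀) (n := ℓ - 1)
    (by rw [card_erase_of_mem (mem_univ _), card_univ, Fintype.card_fin]; omega)
  have hS₀ : σ₀ ∉ S := fun h => (mem_erase.1 (hS h)).1 rfl
  refine ⟨_, mem_bpFixedPts_potts_of_levels rfl hS hh₀ (hv.trans_le hvP) hM0 hz.ne' hmF hFP hFM
    (by rwa [hScard, show q - 1 - (ℓ - 1) = q - ℓ by omega]), z, hz, by simpa using hmF,
    by simpa using hs, pP, pM, hvP, hP1, hM0, hMv, hFP, hFM, S, hS₀, hScard,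
    fun σ hσ => by simp [ne_of_mem_erase (hS hσ), hσ], fun σ h₁ h₂ => by simp [h₁, h₂]⟩

end
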